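/- Let C be a braided finite tensor category with Müger center C′, let φ_{C′} : F_{C′} → F_C be the canonical monomorphism between the coends, and let Φ′_C : Hom_C(1, F_{C′}) → Hom_C(F_C, 1) be the composite of Hom_C(1, φ_{C′}) with Φ_C. Then the image of Φ′_C is the one-dimensional subspace spanned by the counit ε : F_C → 1; in particular, rank(Φ′_C) = 1. -/

import Mathlib

open CategoryTheory Category MonoidalCategory Limits

attribute [local instance] CategoryTheory.Abelian.hasFiniteBiproducts

universe w v u w' v'

namespace NonSSMTC

variable (k : Type u) [Field k]

/-- A finite abelian category over `k`: a `k`-linear additive category that is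
`k`-linearly equivalent to the category of finite-dimensional modules over some
finite-dimensional `k`-algebra `A`. -/
def IsFiniteAbelian (C : Type v) [Category.{w} C] [Preadditive C] [Linear k C] : Prop :=
  ∃ A : AlgCat.{u} k, FiniteDimensional k A ∧
    ∃ G : C ⥤ ModuleCat.{u} A, G.Additive ∧ G.Full ∧ G.Faithful ∧
      (∀ (c : k) {X Y : C} (f : X ⟶ Y), G.map (c • f) = c • G.map f) ∧
      (∀ X : C, Module.Finite k (RestrictScalars k A (G.obj X))) ∧
      (∀ M : ModuleCat.{u} A, Module.Finite k (RestrictScalars k A M) →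
        ∃ X : C, Nonempty (G.obj X ≅ M))

variable {k}
variable (C : Type v) [Category.{w} C] [MonoidalCategory C]

section Plain

variable [HasZeroMorphisms C]

/-- `X` is a subquotient of `M`. -/
def IsSubquotient (X M : C) : Prop :=
  ∃ (W : C) (i : W ⟶ M) (p : W ⟶ X), Mono i ∧ Epi p

end Plain

section Coends

variable [RightRigidCategory C]

/-- The coend `F = ∫^{X ∈ C} X* ⊗ X` of the functor `(X, Y) ↦ X* ⊗ Y`, presented by
its universal property: a dinatural family `ι` which is initial among dinatural
families out of `X* ⊗ X`. -/
structure Coend where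
  F : C
  ι : ∀ X : C, Xᘁ ⊗ X ⟶ F
  dinatural : ∀ {X Y : C} (f : X ⟶ Y), (fᘁ ⊗ₘ 𝟙 X) ≫ ι X = (𝟙 Yᘁ ⊗ₘ f) ≫ ι Y
  universal : ∀ {F' : C} (ι' : ∀ X : C, Xᘁ ⊗ X ⟶ F'),
      (∀ {X Y : C} (f : X ⟶ Y), (fᘁ ⊗ₘ 𝟙 X) ≫ ι' X = (𝟙 Yᘁ ⊗ₘ f) ≫ ι' Y) →
      ∃! φ : F ⟶ F', ∀ X : C, ι X ≫ φ = ι' X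

/-- The coend `F_S = ∫^{X ∈ S} X* ⊗ X` over the full subcategory determined by a
predicate `S`, regarded as an object of the ambient category. -/
structure RelCoend (S : C → Prop) where
  F : C
  ι : ∀ X : C, S X → (Xᘁ ⊗ X ⟶ F)
  dinatural : ∀ {X Y : C} (hX : S X) (hY : S Y) (f : X ⟶ Y),
      (fᘁ ⊗ₘ 𝟙 X) ≫ ι X hX = (𝟙 Yᘁ ⊗ₘ f) ≫ ι Y hY
  universal : ∀ {F' : C} (ι' : ∀ X : C, S X → (Xᘁ ⊗ X ⟶ F')),
      (∀ {X Y : C} (hX : S X) (hY : S Y) (f : X ⟶ Y),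
        (fᘁ ⊗ₘ 𝟙 X) ≫ ι' X hX = (𝟙 Yᘁ ⊗ₘ f) ≫ ι' Y hY) →
      ∃! φ : F ⟶ F', ∀ (X : C) (hX : S X), ι X hX ≫ φ = ι' X hX

end Coends

section Braided

variable [BraidedCategory C]

/-- The double braiding (monodromy) `σ_{Y,X} ∘ σ_{X,Y} : X ⊗ Y ⟶ X ⊗ Y`. -/
def dbl (X Y : C) : X ⊗ Y ⟶ X ⊗ Y := (β_ X Y).hom ≫ (β_ Y X).hom

/-- An object `T` is transparent if the double braiding with every object is trivial. -/
def Transparent (T : C) : Prop := ∀ X : C, dbl C T X = 𝟙 (T ⊗ X)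

variable [RightRigidCategory C]

/-- The double braiding applied "in the middle" of `(X* ⊗ X) ⊗ (Y* ⊗ Y)`. -/
def dblMiddle (X Y : C) : (Xᘁ ⊗ X) ⊗ (Yᘁ ⊗ Y) ⟶ (Xᘁ ⊗ X) ⊗ (Yᘁ ⊗ Y) :=
  (α_ (Xᘁ) X (Yᘁ ⊗ Y)).hom ≫ (𝟙 (Xᘁ) ⊗ₘ (α_ X (Yᘁ) Y).inv) ≫
  (𝟙 (Xᘁ) ⊗ₘ (dbl C X (Yᘁ) ⊗ₘ 𝟙 Y)) ≫ (𝟙 (Xᘁ) ⊗ₘ (α_ X (Yᘁ) Y).hom) ≫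
  (α_ (Xᘁ) X (Yᘁ ⊗ Y)).inv

variable {C}

/-- The canonical Hopf pairing `ω : F ⊗ F ⟶ 1` of the coend, characterized by
`ω ∘ (ι_X ⊗ ι_Y) = (ev_X ⊗ ev_Y) ∘ (id ⊗ σ_{Y*,X} σ_{X,Y*} ⊗ id)`. -/
structure CoendPairing (𝔽 : Coend C) where
  ω : 𝔽.F ⊗ 𝔽.F ⟶ 𝟙_ C
  char : ∀ X Y : C, (𝔽.ι X ⊗ₘ 𝔽.ι Y) ≫ ω =
      dblMiddle C X Y ≫ (ε_ X (Xᘁ) ⊗ₘ ε_ Y (Yᘁ)) ≫ (λ_ (𝟙_ C)).hom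

/-- The morphism `F ⟶ F*` induced by the pairing `ω`. -/
noncomputable def CoendPairing.toDual {𝔽 : Coend C} (p : CoendPairing 𝔽) :
    𝔽.F ⟶ ((𝔽.F)ᘁ) :=
  (ρ_ 𝔽.F).inv ≫ (𝟙 𝔽.F ⊗ₘ η_ 𝔽.F ((𝔽.F)ᘁ)) ≫ (α_ 𝔽.F 𝔽.F ((𝔽.F)ᘁ)).inv ≫
    (p.ω ⊗ₘ 𝟙 ((𝔽.F)ᘁ)) ≫ (λ_ ((𝔽.F)ᘁ)).hom

/-- Non-degeneracy: the morphism `F ⟶ F*` induced by `ω` is an isomorphism. -/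
def CoendPairing.NonDegenerate {𝔽 : Coend C} (p : CoendPairing 𝔽) : Prop :=
  IsIso p.toDual

/-- The map `Φ_C : Hom(1, F) → Hom(F, 1)`, `χ ↦ ω ∘ (χ ⊗ id_F)`. -/
def CoendPairing.Phi {𝔽 : Coend C} (p : CoendPairing 𝔽) :
    (𝟙_ C ⟶ 𝔽.F) → (𝔽.F ⟶ 𝟙_ C) :=
  fun χ => (λ_ 𝔽.F).inv ≫ (χ ⊗ₘ 𝟙 𝔽.F) ≫ p.ω

variable (C)

/-- A twist (ribbon structure) on a braided rigid category. -/
structure Twist where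
  θ : ∀ X : C, X ⟶ X
  isIso : ∀ X, IsIso (θ X)
  natural : ∀ {X Y : C} (f : X ⟶ Y), f ≫ θ Y = θ X ≫ f
  tensor : ∀ X Y : C, θ (X ⊗ Y) = dbl C X Y ≫ (θ X ⊗ₘ θ Y)
  unit : θ (𝟙_ C) = 𝟙 (𝟙_ C)
  dual : ∀ X : C, θ (Xᘁ) = (θ X)ᘁ

variable {C}

/-- A Hopf algebra structure on the coend `F`, whose coalgebra part is the canonical
one: `Δ ∘ ι_X = (ι_X ⊗ ι_X) ∘ (id ⊗ coev_X ⊗ id)` and `ε ∘ ι_X = ev_X`. -/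
structure CoendHopf (𝔽 : Coend C) where
  mul : 𝔽.F ⊗ 𝔽.F ⟶ 𝔽.F
  unit : 𝟙_ C ⟶ 𝔽.F
  comul : 𝔽.F ⟶ 𝔽.F ⊗ 𝔽.F
  counit : 𝔽.F ⟶ 𝟙_ C
  antipode : 𝔽.F ⟶ 𝔽.F
  comul_char : ∀ X : C, 𝔽.ι X ≫ comul =
      (𝟙 (Xᘁ) ⊗ₘ ((λ_ X).inv ≫ (η_ X (Xᘁ) ⊗ₘ 𝟙 X) ≫ (α_ X (Xᘁ) X).hom)) ≫
      (α_ (Xᘁ) X ((Xᘁ) ⊗ X)).inv ≫ (𝔽.ι X ⊗ₘ 𝔽.ι X)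
  counit_char : ∀ X : C, 𝔽.ι X ≫ counit = ε_ X (Xᘁ)
  mul_assoc' : (mul ⊗ₘ 𝟙 𝔽.F) ≫ mul = (α_ 𝔽.F 𝔽.F 𝔽.F).hom ≫ (𝟙 𝔽.F ⊗ₘ mul) ≫ mul
  one_mul' : (unit ⊗ₘ 𝟙 𝔽.F) ≫ mul = (λ_ 𝔽.F).hom
  mul_one' : (𝟙 𝔽.F ⊗ₘ unit) ≫ mul = (ρ_ 𝔽.F).hom
  comul_assoc' : comul ≫ (comul ⊗ₘ 𝟙 𝔽.F) ≫ (α_ 𝔽.F 𝔽.F 𝔽.F).hom = comul ≫ (𝟙 𝔽.F ⊗ₘ comul)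
  counit_comul' : comul ≫ (counit ⊗ₘ 𝟙 𝔽.F) = (λ_ 𝔽.F).inv
  comul_counit' : comul ≫ (𝟙 𝔽.F ⊗ₘ counit) = (ρ_ 𝔽.F).inv
  mul_comul' : mul ≫ comul = (comul ⊗ₘ comul) ≫ tensorμ 𝔽.F 𝔽.F 𝔽.F 𝔽.F ≫ (mul ⊗ₘ mul)
  unit_comul' : unit ≫ comul = (λ_ (𝟙_ C)).inv ≫ (unit ⊗ₘ unit)
  mul_counit' : mul ≫ counit = (counit ⊗ₘ counit) ≫ (λ_ (𝟙_ C)).hom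
  unit_counit' : unit ≫ counit = 𝟙 (𝟙_ C)
  antipode_left : comul ≫ (antipode ⊗ₘ 𝟙 𝔽.F) ≫ mul = counit ≫ unit
  antipode_right : comul ≫ (𝟙 𝔽.F ⊗ₘ antipode) ≫ mul = counit ≫ unit

variable {𝔽 : Coend C}

/-- A two-sided `1`-based integral `Λ : 1 ⟶ F` of the coend Hopf algebra. -/
def IsIntegral [Preadditive C] (H : CoendHopf 𝔽) (Λ : 𝟙_ C ⟶ 𝔽.F) : Prop :=
  Λ ≠ 0 ∧ (ρ_ 𝔽.F).inv ≫ (𝟙 𝔽.F ⊗ₘ Λ) ≫ H.mul = H.counit ≫ Λ ∧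
    (λ_ 𝔽.F).inv ≫ (Λ ⊗ₘ 𝟙 𝔽.F) ≫ H.mul = H.counit ≫ Λ

/-- Normalization `ω ∘ (Λ ⊗ Λ) = id₁` of an integral against the pairing. -/
def IsNormalized (ω : 𝔽.F ⊗ 𝔽.F ⟶ 𝟙_ C) (Λ : 𝟙_ C ⟶ 𝔽.F) : Prop :=
  (λ_ (𝟙_ C)).inv ≫ (Λ ⊗ₘ Λ) ≫ ω = 𝟙 (𝟙_ C)

/-- `Ω` is the monodromy of the coend:
`Ω ∘ (ι_X ⊗ ι_Y) = (ι_X ⊗ ι_Y) ∘ (id ⊗ σ_{Y*,X} σ_{X,Y*} ⊗ id)`. -/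
def IsMonodromy (Ω : 𝔽.F ⊗ 𝔽.F ⟶ 𝔽.F ⊗ 𝔽.F) : Prop :=
  ∀ X Y : C, (𝔽.ι X ⊗ₘ 𝔽.ι Y) ≫ Ω = dblMiddle C X Y ≫ (𝔽.ι X ⊗ₘ 𝔽.ι Y)

/-- Lyubashenko's map `S = (ε ⊗ id) ∘ Ω ∘ (id ⊗ Λ) : F ⟶ F`. -/
def lyubashenkoS (H : CoendHopf 𝔽) (Ω : 𝔽.F ⊗ 𝔽.F ⟶ 𝔽.F ⊗ 𝔽.F) (Λ : 𝟙_ C ⟶ 𝔽.F) :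
    𝔽.F ⟶ 𝔽.F :=
  (ρ_ 𝔽.F).inv ≫ (𝟙 𝔽.F ⊗ₘ Λ) ≫ Ω ≫ (H.counit ⊗ₘ 𝟙 𝔽.F) ≫ (λ_ 𝔽.F).hom

/-- The canonical right coaction `ρ_X = (id ⊗ ι_X) ∘ (coev_X ⊗ id) : X ⟶ X ⊗ F`. -/
def coact (𝔽 : Coend C) (X : C) : X ⟶ X ⊗ 𝔽.F :=
  (λ_ X).inv ≫ (η_ X (Xᘁ) ⊗ₘ 𝟙 X) ≫ (α_ X (Xᘁ) X).hom ≫ (𝟙 X ⊗ₘ 𝔽.ι X)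

/-- The endomorphism `ã` of the identity functor associated with `a : F ⟶ 1`,
with components `ã_X = (id_X ⊗ a) ∘ ρ_X`. -/
def tilde (𝔽 : Coend C) (a : 𝔽.F ⟶ 𝟙_ C) : ∀ X : C, X ⟶ X :=
  fun X => coact 𝔽 X ≫ (𝟙 X ⊗ₘ a) ≫ (ρ_ X).hom

/-- The isomorphism `Hom(F, 1) → Hom(1, F)`, `f ↦ (f ⊗ id_F) ∘ Δ ∘ Λ`. -/
def intHom (H : CoendHopf 𝔽) (Λ : 𝟙_ C ⟶ 𝔽.F) : (𝔽.F ⟶ 𝟙_ C) → (𝟙_ C ⟶ 𝔽.F) :=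
  fun f => Λ ≫ H.comul ≫ (f ⊗ₘ 𝟙 𝔽.F) ≫ (λ_ 𝔽.F).hom

/-- The Drinfeld morphism `u_X : X ⟶ X**`. -/
def drinfeldU (X : C) : X ⟶ ((Xᘁ)ᘁ) :=
  (ρ_ X).inv ≫ (𝟙 X ⊗ₘ η_ (Xᘁ) ((Xᘁ)ᘁ)) ≫ (α_ X (Xᘁ) ((Xᘁ)ᘁ)).inv ≫
    ((β_ X (Xᘁ)).hom ⊗ₘ 𝟙 ((Xᘁ)ᘁ)) ≫ (ε_ X (Xᘁ) ⊗ₘ 𝟙 ((Xᘁ)ᘁ)) ≫ (λ_ ((Xᘁ)ᘁ)).hom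

/-- The internal character `ch(V) = ι_{V*} ∘ (p_V ⊗ id) ∘ coev_V : 1 ⟶ F` of `V`, with
respect to a pivotal family `p X : X ⟶ X**`. -/
def internalChar (𝔽 : Coend C) (p : ∀ X : C, X ⟶ ((Xᘁ)ᘁ)) (V : C) : 𝟙_ C ⟶ 𝔽.F :=
  η_ V (Vᘁ) ≫ (p V ⊗ₘ 𝟙 (Vᘁ)) ≫ 𝔽.ι (Vᘁ)

/-- The twisted coevaluation `coev'_V = (id ⊗ θ_V) ∘ σ_{V,V*} ∘ coev_V : 1 ⟶ V* ⊗ V`. -/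
def coev' (θ : ∀ X : C, X ⟶ X) (V : C) : 𝟙_ C ⟶ ((Vᘁ) ⊗ V) :=
  η_ V (Vᘁ) ≫ (β_ V (Vᘁ)).hom ≫ (𝟙 (Vᘁ) ⊗ₘ θ V)

variable (C)

/-- The Müger center of `C` is trivial: every transparent object is a finite direct
sum of copies of the tensor unit. -/
def MugerTrivial [Preadditive C] [HasFiniteBiproducts C] : Prop :=
  ∀ T : C, Transparent C T → ∃ n : ℕ, Nonempty (T ≅ ⨁ (fun _ : Fin n => 𝟙_ C))

end Braided

section FP

variable [Abelian C]

/-- Data of the Frobenius–Perron dimension function on the (tensor full) subcategory of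
`C` determined by the predicate `S`: the unique ring homomorphism `Gr(S) → ℝ` strictly
positive on nonzero objects, presented as a function on objects which is additive on
short exact sequences in `S`, multiplicative on tensor products and normalized. -/
structure FPDimData (S : C → Prop) where
  d : C → ℝ
  pos : ∀ X : C, S X → ¬ IsZero X → 0 < d X
  additive : ∀ T : ShortComplex C, T.ShortExact →
      S T.X₁ → S T.X₂ → S T.X₃ → d T.X₂ = d T.X₁ + d T.X₃
  mul : ∀ X Y : C, S X → S Y → d (X ⊗ Y) = d X * d Y
  one : d (𝟙_ C) = 1

/-- A complete set of representatives `V i` of the isomorphism classes of simple objects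
of the full abelian subcategory of `C` determined by `S`, together with projective
covers `P i → V i` computed inside that subcategory. -/
structure SimplesData (S : C → Prop) where
  n : ℕ
  V : Fin n → C
  memV : ∀ i, S (V i)
  simple : ∀ i, Simple (V i)
  noniso : ∀ i j, i ≠ j → IsEmpty (V i ≅ V j)
  complete : ∀ X : C, S X → Simple X → ∃ i, Nonempty (X ≅ V i)
  P : Fin n → C
  memP : ∀ i, S (P i)
  π : ∀ i, P i ⟶ V i
  epi : ∀ i, Epi (π i)
  proj : ∀ (i) (A B : C), S A → S B → ∀ g : A ⟶ B, Epi g →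
      ∀ h : P i ⟶ B, ∃ h' : P i ⟶ A, h' ≫ g = h
  essential : ∀ (i) (Q : C) (g : Q ⟶ P i), S Q → Epi (g ≫ π i) → Epi g

/-- `FPdim(S) = ∑ᵢ FPdim(Pᵢ)·FPdim(Vᵢ)`. -/
noncomputable def catFPdim {S : C → Prop} (fp : FPDimData C S) (sd : SimplesData C S) :
    ℝ :=
  ∑ i : Fin sd.n, fp.d (sd.P i) * fp.d (sd.V i)

/-- A complete set of representatives of the isomorphism classes of simple objects. -/
structure SimpleReps where
  n : ℕ
  V : Fin n → C
  simple : ∀ i, Simple (V i)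
  noniso : ∀ i j, i ≠ j → IsEmpty (V i ≅ V j)
  complete : ∀ X : C, Simple X → ∃ i, Nonempty (X ≅ V i)

/-- `π : P ⟶ X` exhibits `P` as a projective cover of `X`. -/
def IsProjectiveCover {P X : C} (π : P ⟶ X) : Prop :=
  Projective P ∧ Epi π ∧ ∀ (Q : C) (g : Q ⟶ P), Epi (g ≫ π) → Epi g

/-- `W` is a semisimple object: a finite direct sum of simple objects. -/
def IsSemisimpleObj (W : C) : Prop :=
  ∃ (n : ℕ) (f : Fin n → C), (∀ i, Simple (f i)) ∧ Nonempty (W ≅ ⨁ f)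

/-- `s : W ⟶ X` exhibits `W` as the socle (the largest semisimple subobject) of `X`. -/
def IsSocle {W X : C} (s : W ⟶ X) : Prop :=
  Mono s ∧ IsSemisimpleObj C W ∧
    ∀ (W' : C) (t : W' ⟶ X), Mono t → IsSemisimpleObj C W' → ∃ u : W' ⟶ W, u ≫ s = t

variable [RightRigidCategory C]

/-- `D` is the distinguished invertible object of `C`: the socle of `P₀*`, where
`π : P₀ ⟶ 1` is the projective cover of the unit object. -/
def IsDistInvertible (D : C) : Prop :=
  ∃ (P₀ : C) (π : P₀ ⟶ 𝟙_ C), IsProjectiveCover C π ∧ ∃ s : D ⟶ (P₀ᘁ), IsSocle C s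

/-- `C` is unimodular: the distinguished invertible object is isomorphic to the unit. -/
def Unimodular : Prop :=
  ∃ D : C, IsDistInvertible C D ∧ Nonempty (D ≅ 𝟙_ C)

variable [LeftRigidCategory C]

/-- A tensor full subcategory: a nonzero full subcategory closed under finite direct
sums, subquotients, tensor products, and left and right duals. -/
structure IsTensorFullSub (S : C → Prop) : Prop where
  nonzero : ∃ X, S X ∧ ¬ IsZero X
  biprod : ∀ {X Y : C}, S X → S Y → S (X ⊞ Y)
  subquot : ∀ {X M : C}, S M → IsSubquotient C X M → S X
  tensor : ∀ {X Y : C}, S X → S Y → S (X ⊗ Y)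
  rdual : ∀ {X : C}, S X → S (Xᘁ)
  ldual : ∀ {X : C}, S X → S (ᘁX)

/-- The subcategory `X ∨ Y`: the image of the tensor functor `X ⊠ Y → C`, i.e. the
class of subquotients of finite direct sums of objects `x ⊗ y` with `x ∈ X`, `y ∈ Y`. -/
def veeSub (SX SY : C → Prop) : C → Prop := fun Z =>
  ∃ (n : ℕ) (x y : Fin n → C), (∀ i, SX (x i)) ∧ (∀ i, SY (y i)) ∧
    IsSubquotient C Z (⨁ fun i => x i ⊗ y i)

end FP

section Pivotal

variable [RightRigidCategory C]

/-- The canonical "nested evaluation" `(Y* ⊗ X*) ⊗ (X ⊗ Y) ⟶ 1`. -/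
def nestedEval (X Y : C) : ((Yᘁ) ⊗ (Xᘁ)) ⊗ (X ⊗ Y) ⟶ 𝟙_ C :=
  (α_ (Yᘁ) (Xᘁ) (X ⊗ Y)).hom ≫
    (𝟙 (Yᘁ) ⊗ₘ ((α_ (Xᘁ) X Y).inv ≫ (ε_ X (Xᘁ) ⊗ₘ 𝟙 Y) ≫ (λ_ Y).hom)) ≫ ε_ Y (Yᘁ)

/-- A pivotal structure: a monoidal natural isomorphism `id ≅ (−)**`.  Its monoidality
is expressed via the canonical isomorphisms `Y* ⊗ X* ≅ (X ⊗ Y)*` (characterized by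
compatibility with the evaluations), which are part of the data. -/
structure PivotalData where
  dTI : ∀ X Y : C, ((Yᘁ) ⊗ (Xᘁ)) ≅ ((X ⊗ Y)ᘁ)
  dTI_char : ∀ X Y : C,
    ((dTI X Y).hom ⊗ₘ 𝟙 (X ⊗ Y)) ≫ ε_ (X ⊗ Y) ((X ⊗ Y)ᘁ) = nestedEval C X Y
  p : ∀ X : C, X ⟶ ((Xᘁ)ᘁ)
  isIso : ∀ X, IsIso (p X)
  natural : ∀ {X Y : C} (f : X ⟶ Y), f ≫ p Y = p X ≫ ((fᘁ)ᘁ)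
  tensor : ∀ X Y : C, p (X ⊗ Y) =
    (p X ⊗ₘ p Y) ≫ (dTI (Yᘁ) (Xᘁ)).hom ≫ (((dTI X Y).inv)ᘁ)

variable [Abelian C]

/-- Data of the distinguished invertible object `α` together with the Radford
isomorphism `δ_X : α ⊗ X ⊗ α* ≅ X****` of Etingof–Nikshych–Ostrik. -/
structure RadfordData where
  α : C
  dist : IsDistInvertible C α
  δ : ∀ X : C, (α ⊗ (X ⊗ (αᘁ))) ≅ (((((Xᘁ)ᘁ)ᘁ)ᘁ))
  natural : ∀ {X Y : C} (f : X ⟶ Y),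
    (𝟙 α ⊗ₘ (f ⊗ₘ 𝟙 (αᘁ))) ≫ (δ Y).hom = (δ X).hom ≫ ((((fᘁ)ᘁ)ᘁ)ᘁ)

/-- `C` is spherical in the sense of Douglas–Schommer-Pries–Snyder: there is a pivotal
structure `p` such that for `β = 1` one has `β ⊗ β ≅ α` and, under this isomorphism,
the square of `p` coincides with the Radford isomorphism `δ`. -/
def SphericalDSPS (rd : RadfordData C) : Prop :=
  ∃ (pd : PivotalData C) (a : rd.α ≅ 𝟙_ C) (h : ((rd.α)ᘁ) ≅ 𝟙_ C),
    ((h.inv ⊗ₘ a.inv) ≫ ε_ rd.α ((rd.α)ᘁ) = (λ_ (𝟙_ C)).hom) ∧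
    ∀ X : C, (rd.δ X).hom =
      (a.hom ⊗ₘ (𝟙 X ⊗ₘ h.hom)) ≫ (𝟙 (𝟙_ C) ⊗ₘ (ρ_ X).hom) ≫ (λ_ X).hom ≫
        pd.p X ≫ pd.p ((Xᘁ)ᘁ)

end Pivotal

section Deligne

variable (k)
variable [Abelian C] [Linear k C]

/-- A bifunctor which is `k`-bilinear and right exact in each variable. -/
def BilinearRightExact {E : Type v} [Category.{w} E] [Abelian E] [Linear k E]
    (Fb : C ⥤ C ⥤ E) : Prop :=
  (∀ X : C, (Fb.obj X).Additive) ∧ (∀ Y : C, (Fb.flip.obj Y).Additive) ∧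
  (∀ X : C, PreservesFiniteColimits (Fb.obj X)) ∧
  (∀ Y : C, PreservesFiniteColimits (Fb.flip.obj Y)) ∧
  (∀ (X : C) (c : k) {Y Y' : C} (g : Y ⟶ Y'),
      (Fb.obj X).map (c • g) = c • (Fb.obj X).map g) ∧
  (∀ (c : k) {X X' : C} (f : X ⟶ X') (Y : C),
      (Fb.map (c • f)).app Y = c • (Fb.map f).app Y)

/-- A functor which is additive, `k`-linear and right exact. -/
def LinearRightExact {P : Type v} [Category.{w} P] [Preadditive P] [Linear k P]
    {E : Type v'} [Category.{w'} E] [Preadditive E] [Linear k E] (G : P ⥤ E) : Prop :=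
  G.Additive ∧ (∀ (c : k) {X Y : P} (f : X ⟶ Y), G.map (c • f) = c • G.map f) ∧
    PreservesFiniteColimits G

/-- `(P, T)` is a Deligne tensor product `C ⊠ C`: the bifunctor `T` is `k`-bilinear and
right exact in each variable, and universal among such bifunctors with values in
`k`-linear abelian categories. -/
structure IsDeligneProduct (P : Type v) [Category.{w} P] [Abelian P] [Linear k P]
    (T : C ⥤ C ⥤ P) : Prop where
  bilex : BilinearRightExact k C T
  lift : ∀ (E : Type v) [Category.{w} E] [Abelian E] [Linear k E] (Fb : C ⥤ C ⥤ E),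
    BilinearRightExact k C Fb →
    ∃ G : P ⥤ E, LinearRightExact k G ∧
      Nonempty ((T ⋙ (Functor.whiskeringRight C P E).obj G) ≅ Fb)
  unique : ∀ (E : Type v) [Category.{w} E] [Abelian E] [Linear k E] (G G' : P ⥤ E),
    LinearRightExact k G → LinearRightExact k G' →
    Nonempty ((T ⋙ (Functor.whiskeringRight C P E).obj G) ≅
      (T ⋙ (Functor.whiskeringRight C P E).obj G')) →
    Nonempty (G ≅ G')

variable [BraidedCategory C]

/-- The bifunctor `C × C ⥤ Z(C)`, `(X, Y) ↦ T₊(X) ⊗ T₋(Y)`, where `T₊(X) = (X, σ_{X,−})`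
and `T₋(Y) = (Y, σ_{−,Y}⁻¹)`. -/
noncomputable def centerBifunctor : C ⥤ C ⥤ Center C :=
  Center.ofBraided C ⋙ curriedTensor (Center C) ⋙
    (Functor.whiskeringLeft C (Center C) (Center C)).obj
      (@Center.ofBraided C _ _ (reverseBraiding C))

end Deligne

/-!
On a transparent object `X` the double braiding in `ω ∘ (ι_X ⊗ ι_Y)` disappears, so this
composite is `ev_X ⊗ ev_Y = ε ι_X ⊗ ε ι_Y`. As `φ ∘ ι^{C′}_X = ι_X`, the universal property of
`F_{C′}` gives `ω ∘ (φ ⊗ ι_Y) = εφ ⊗ ει_Y`, hence `Φ(φ ∘ χ) = (ε ∘ φ ∘ χ) · ε` with a scalar in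
`End(1) = k`. Every scalar occurs, because the coevaluation of the transparent object `1`
yields `χ` with `ε ∘ φ ∘ χ = id_1`.
-/

open ModuleCat in
theorem IsFiniteAbelian.finiteDimensional_hom {D : Type v} [Category.{w} D] [Preadditive D]
    [Linear k D] (hfin : IsFiniteAbelian k D) (X Y : D) : FiniteDimensional k (X ⟶ Y) := by
  obtain ⟨A, -, G, hadd, -, hfaith, hlin, hfd, -⟩ := hfin
  have : Module.Finite k (G.obj X) := hfd X
  have : Module.Finite k (G.obj Y) := hfd Y
  let E : (X ⟶ Y) →ₗ[k] (G.obj X →ₗ[k] G.obj Y) :=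
    { toFun := fun f => (G.map f).hom.restrictScalars k
      map_add' := fun f g => by simp [hadd.map_add]
      map_smul' := fun c f => by ext; simp [hlin] }
  refine Module.Finite.of_injective E fun f g h => G.map_injective ?_
  exact ModuleCat.hom_ext (LinearMap.restrictScalars_injective k h)

theorem range_comp_endomorphism_eq_span [IsAlgClosed k] {D : Type v} [Category.{w} D]
    [Preadditive D] [Linear k D] [HasKernels D] {S Z : D} [Simple S]
    [FiniteDimensional k (S ⟶ S)] (f : Z ⟶ S) :
    Set.range (fun c : S ⟶ S => f ≫ c) = (Submodule.span k {f} : Set (Z ⟶ S)) := by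
  ext g
  rw [SetLike.mem_coe, Submodule.mem_span_singleton]
  constructor
  · rintro ⟨c, rfl⟩
    obtain ⟨a, rfl⟩ := endomorphism_simple_eq_smul_id k c
    exact ⟨a, by simp⟩
  · rintro ⟨a, rfl⟩
    exact ⟨a • 𝟙 S, by simp⟩

variable {C}

theorem leftUnitor_inv_comp_tensorHom_comp_leftUnitor {A : C} (c : 𝟙_ C ⟶ 𝟙_ C)
    (g : A ⟶ 𝟙_ C) : (λ_ A).inv ≫ (c ⊗ₘ g) ≫ (λ_ (𝟙_ C)).hom = g ≫ c := by
  rw [tensorHom_def', assoc, ← leftUnitor_inv_naturality_assoc, whiskerRight_id, unitors_equal]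
  simp [unitors_inv_equal]

theorem tensorUnit_coevaluation_comp_evaluation {Y : C} [ExactPairing (𝟙_ C) Y] :
    η_ (𝟙_ C) Y ≫ (λ_ Y).hom ≫ (ρ_ Y).inv ≫ ε_ (𝟙_ C) Y = 𝟙 (𝟙_ C) :=
  calc η_ (𝟙_ C) Y ≫ (λ_ Y).hom ≫ (ρ_ Y).inv ≫ ε_ (𝟙_ C) Y
      = (ρ_ (𝟙_ C)).inv ≫ (η_ (𝟙_ C) Y ▷ 𝟙_ C ≫ (α_ (𝟙_ C) Y (𝟙_ C)).hom ≫
          𝟙_ C ◁ ε_ (𝟙_ C) Y) ≫ (λ_ (𝟙_ C)).hom := by monoidal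
    _ = 𝟙 (𝟙_ C) := by rw [ExactPairing.evaluation_coevaluation]; monoidal

section Coends

variable [RightRigidCategory C]

theorem Coend.hom_ext (𝔽 : Coend C) {Z : C} {g h : 𝔽.F ⟶ Z}
    (w : ∀ X : C, 𝔽.ι X ≫ g = 𝔽.ι X ≫ h) : g = h := by
  obtain ⟨m, -, hu⟩ := 𝔽.universal (fun X => 𝔽.ι X ≫ g) fun f => by
    rw [← assoc, 𝔽.dinatural f, assoc]
  rw [hu g fun X => rfl, hu h fun X => (w X).symm]

theorem RelCoend.hom_ext {S : C → Prop} (FS : RelCoend C S) {Z : C} {g h : FS.F ⟶ Z}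
    (w : ∀ (X : C) (hX : S X), FS.ι X hX ≫ g = FS.ι X hX ≫ h) : g = h := by
  obtain ⟨m, -, hu⟩ := FS.universal (fun X hX => FS.ι X hX ≫ g) fun hX hY f => by
    rw [← assoc, FS.dinatural hX hY f, assoc]
  rw [hu g fun X hX => rfl, hu h fun X hX => (w X hX).symm]

/-- `- ⊗ A` is a left adjoint, so `FS.F ⊗ A` is again a coend, with structure maps `ι_X ▷ A`. -/
theorem RelCoend.whiskerRight_hom_ext {S : C → Prop} (FS : RelCoend C S) (A : C)
    [HasRightDual A] {Z : C} {g h : FS.F ⊗ A ⟶ Z}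
    (w : ∀ (X : C) (hX : S X), FS.ι X hX ▷ A ≫ g = FS.ι X hX ▷ A ≫ h) : g = h := by
  let e := tensorRightHomEquiv FS.F A (Aᘁ) Z
  refine e.injective (FS.hom_ext fun X hX => ?_)
  apply (tensorRightHomEquiv _ A (Aᘁ) Z).symm.injective
  rw [tensorRightHomEquiv_symm_naturality, tensorRightHomEquiv_symm_naturality,
    e.symm_apply_apply, e.symm_apply_apply, w]

end Coends

section Braided

variable [BraidedCategory C]

theorem transparent_unit : Transparent C (𝟙_ C) := fun X => by
  simp [dbl, braiding_tensorUnit_left, braiding_tensorUnit_right]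

variable [RightRigidCategory C]

theorem dblMiddle_eq_id_of_transparent {X : C} (hX : Transparent C X) (Y : C) :
    dblMiddle C X Y = 𝟙 _ := by
  simp [dblMiddle, hX (Yᘁ)]

variable {𝔽 : Coend C} (p : CoendPairing 𝔽) {FS : RelCoend C (Transparent C)}
  {φ : FS.F ⟶ 𝔽.F} {εF : 𝔽.F ⟶ 𝟙_ C}

theorem CoendPairing.tensorHom_ι_comp_ω_of_transparent
    (hφ : ∀ (X : C) (hX : Transparent C X), FS.ι X hX ≫ φ = 𝔽.ι X)
    (hε : ∀ X : C, 𝔽.ι X ≫ εF = ε_ X (Xᘁ)) (Y : C) :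
    (φ ⊗ₘ 𝔽.ι Y) ≫ p.ω = ((φ ≫ εF) ⊗ₘ (𝔽.ι Y ≫ εF)) ≫ (λ_ (𝟙_ C)).hom := by
  refine FS.whiskerRight_hom_ext _ fun X hX => ?_
  simp only [← tensorHom_id, ← assoc, tensorHom_comp_tensorHom, id_comp, hφ, hε]
  rw [p.char, dblMiddle_eq_id_of_transparent hX, id_comp]

theorem CoendPairing.Phi_comp_of_transparent
    (hφ : ∀ (X : C) (hX : Transparent C X), FS.ι X hX ≫ φ = 𝔽.ι X)
    (hε : ∀ X : C, 𝔽.ι X ≫ εF = ε_ X (Xᘁ)) (χ : 𝟙_ C ⟶ FS.F) :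
    p.Phi (χ ≫ φ) = εF ≫ χ ≫ φ ≫ εF := by
  refine 𝔽.hom_ext fun Y => ?_
  calc 𝔽.ι Y ≫ p.Phi (χ ≫ φ)
      = (λ_ _).inv ≫ (χ ⊗ₘ 𝟙 _) ≫ (φ ⊗ₘ 𝔽.ι Y) ≫ p.ω := by
        rw [CoendPairing.Phi, leftUnitor_inv_naturality_assoc, tensorHom_comp_tensorHom_assoc,
          id_comp, tensorHom_id, tensorHom_def', assoc]
    _ = (λ_ _).inv ≫ ((χ ≫ φ ≫ εF) ⊗ₘ (𝔽.ι Y ≫ εF)) ≫ (λ_ _).hom := by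
        rw [p.tensorHom_ι_comp_ω_of_transparent hφ hε, tensorHom_comp_tensorHom_assoc, id_comp]
    _ = 𝔽.ι Y ≫ εF ≫ χ ≫ φ ≫ εF := by
        rw [leftUnitor_inv_comp_tensorHom_comp_leftUnitor, assoc]

theorem exists_comp_comp_counit_eq_id
    (hφ : ∀ (X : C) (hX : Transparent C X), FS.ι X hX ≫ φ = 𝔽.ι X)
    (hε : ∀ X : C, 𝔽.ι X ≫ εF = ε_ X (Xᘁ)) :
    ∃ χ : 𝟙_ C ⟶ FS.F, χ ≫ φ ≫ εF = 𝟙 (𝟙_ C) :=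
  ⟨(η_ _ _ ≫ (λ_ _).hom ≫ (ρ_ _).inv) ≫ FS.ι (𝟙_ C) transparent_unit, by
    rw [assoc, reassoc_of% hφ, hε]
    simpa only [assoc] using tensorUnit_coevaluation_comp_evaluation⟩

end Braided

theorem image_of_Phi_on_Muger_center_is_span_counit_general
    (k : Type u) [Field k] [IsAlgClosed k]
    (C : Type v) [Category.{w} C] [Abelian C] [Linear k C]
    [MonoidalCategory C]
    [RigidCategory C] [BraidedCategory C]
    (hfin : IsFiniteAbelian k C) (hunit : Simple (𝟙_ C))
    (𝔽 : Coend C) (p : CoendPairing 𝔽)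
    (FS : RelCoend C (Transparent C))
    (φ : FS.F ⟶ 𝔽.F) (hφ : ∀ (X : C) (hX : Transparent C X), FS.ι X hX ≫ φ = 𝔽.ι X)
    (εF : 𝔽.F ⟶ 𝟙_ C) (hε : ∀ X : C, 𝔽.ι X ≫ εF = ε_ X (Xᘁ)) :
    Set.range (fun χ : 𝟙_ C ⟶ FS.F => p.Phi (χ ≫ φ)) =
        (Submodule.span k ({εF} : Set (𝔽.F ⟶ 𝟙_ C)) : Submodule k (𝔽.F ⟶ 𝟙_ C)) ∧
      Module.finrank k
        (Submodule.span k (Set.range (fun χ : 𝟙_ C ⟶ FS.F => p.Phi (χ ≫ φ)))) = 1 := by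
  have : FiniteDimensional k (𝟙_ C ⟶ 𝟙_ C) := hfin.finiteDimensional_hom _ _
  obtain ⟨χ₀, hχ₀⟩ := exists_comp_comp_counit_eq_id hφ hε
  have hsurj : Function.Surjective fun χ : 𝟙_ C ⟶ FS.F => χ ≫ φ ≫ εF :=
    fun c => ⟨c ≫ χ₀, by simp only [assoc, hχ₀, comp_id]⟩
  have hrange : Set.range (fun χ : 𝟙_ C ⟶ FS.F => p.Phi (χ ≫ φ)) = Submodule.span k {εF} := by
    simp_rw [p.Phi_comp_of_transparent hφ hε]
    exact (hsurj.range_comp (εF ≫ ·)).trans (range_comp_endomorphism_eq_span εF)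
  have hεF : εF ≠ 0 := fun h => id_nonzero (𝟙_ C) (by rw [← hχ₀, h, comp_zero, comp_zero])
  exact ⟨hrange, by rw [hrange, Submodule.span_eq, finrank_span_singleton hεF]⟩

/-- Let `C` be a braided finite tensor category with Müger center
`C′`, `φ : F_{C′} ⟶ F_C` the canonical monomorphism, and
`Φ′_C = Φ_C ∘ Hom(1, φ)`.  Then the image of `Φ′_C` is the one-dimensional subspace
spanned by the counit `ε : F_C ⟶ 1`; in particular `rank Φ′_C = 1`. -/
theorem image_of_Phi_on_Muger_center_is_span_counit
    (k : Type u) [Field k] [IsAlgClosed k]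
    (C : Type v) [Category.{w} C] [Abelian C] [Linear k C]
    [MonoidalCategory C] [MonoidalPreadditive C] [MonoidalLinear k C]
    [RigidCategory C] [BraidedCategory C]
    (hfin : IsFiniteAbelian k C) (hunit : Simple (𝟙_ C))
    (𝔽 : Coend C) (p : CoendPairing 𝔽)
    (FS : RelCoend C (Transparent C))
    (φ : FS.F ⟶ 𝔽.F) (hφ : ∀ (X : C) (hX : Transparent C X), FS.ι X hX ≫ φ = 𝔽.ι X)
    (hmono : Mono φ)
    (εF : 𝔽.F ⟶ 𝟙_ C) (hε : ∀ X : C, 𝔽.ι X ≫ εF = ε_ X (Xᘁ)) :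
    Set.range (fun χ : 𝟙_ C ⟶ FS.F => p.Phi (χ ≫ φ)) =
        (Submodule.span k ({εF} : Set (𝔽.F ⟶ 𝟙_ C)) : Submodule k (𝔽.F ⟶ 𝟙_ C)) ∧
      Module.finrank k
        (Submodule.span k (Set.range (fun χ : 𝟙_ C ⟶ FS.F => p.Phi (χ ≫ φ)))) = 1 :=
  image_of_Phi_on_Muger_center_is_span_counit_general k C hfin hunit 𝔽 p FS φ hφ εF hε

end NonSSMTC
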